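/- For natural numbers p, a₀, r, d: the sum over compositions of r into d positive parts of C(p,μ₁)···C(p,μ_d), plus the sum over compositions of r into d+1 positive parts of C(p,μ₁)···C(p,μ_d)·C(a₀,μ_{d+1}), equals the alternating sum over i from 0 to d of (−1)^i·C(d,i)·C((d−i)·p + a₀, r). -/

import Mathlib

/-!
Let `q = (1 + X)^p - 1`. Its `k`-th coefficient is `C(p, k)` for `k > 0` and `0` for `k = 0`, so the
two composition sums are the `r`-th coefficients of `q^d` and `q^d ((1 + X)^a₀ - 1)`; their sum is
the `r`-th coefficient of `q^d (1 + X)^a₀`. Expanding `q^d = (-1 + (1 + X)^p)^d` by the binomial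
theorem gives `∑ i, (-1)^i C(d, i) (1 + X)^((d - i) p + a₀)`, whose `r`-th coefficient is the
alternating sum.
-/

open Finset Finset.Nat Polynomial

theorem Finset.Nat.sum_antidiagonalTuple_succ {M : Type*} [AddCommMonoid M] (k n : ℕ)
    (f : (Fin (k + 1) → ℕ) → M) :
    ∑ μ ∈ antidiagonalTuple (k + 1) n, f μ =
      ∑ ij ∈ antidiagonal n, ∑ ν ∈ antidiagonalTuple k ij.2, f (Fin.cons ij.1 ν) := by
  rw [sum_sigma']
  refine sum_bij' (fun μ _ => ⟨(μ 0, ∑ i : Fin k, μ i.succ), Fin.tail μ⟩)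
    (fun x _ => Fin.cons x.1.1 x.2) ?_ ?_ ?_ ?_ ?_
  · intro μ hμ
    rw [mem_antidiagonalTuple, Fin.sum_univ_succ] at hμ
    simpa [mem_antidiagonalTuple, Fin.tail] using hμ
  · rintro ⟨⟨i, j⟩, ν⟩ h
    simp_all [mem_antidiagonalTuple, Fin.sum_univ_succ]
  · intro μ _
    exact Fin.cons_self_tail μ
  · rintro ⟨⟨i, j⟩, ν⟩ h
    simp_all [mem_antidiagonalTuple]
  · intro μ _
    rw [Fin.cons_self_tail]

theorem Polynomial.coeff_prod_eq_sum_antidiagonalTuple {R : Type*} [CommSemiring R] :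
    ∀ {k : ℕ} (f : Fin k → R[X]) (n : ℕ),
      (∏ i, f i).coeff n = ∑ μ ∈ antidiagonalTuple k n, ∏ i, (f i).coeff (μ i)
  | 0, f, n => by
    cases n <;> simp [coeff_one, antidiagonalTuple_zero_succ]
  | k + 1, f, n => by
    simp only [Fin.prod_univ_succ, coeff_mul, sum_antidiagonalTuple_succ, Fin.cons_zero,
      Fin.cons_succ, coeff_prod_eq_sum_antidiagonalTuple (fun i => f i.succ), mul_sum]

section
variable {R : Type*} [CommRing R]

theorem Polynomial.coeff_prod_eq_sum_pos_antidiagonalTuple {k : ℕ} (f : Fin k → R[X])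
    (hf : ∀ i, (f i).coeff 0 = 0) (n : ℕ) :
    (∏ i, f i).coeff n =
      ∑ μ ∈ (antidiagonalTuple k n).filter (fun μ => ∀ i, 0 < μ i), ∏ i, (f i).coeff (μ i) := by
  rw [coeff_prod_eq_sum_antidiagonalTuple, sum_filter_of_ne]
  intro μ _ hne i
  refine Nat.pos_of_ne_zero fun h0 => hne (prod_eq_zero (mem_univ i) ?_)
  rw [h0, hf]

theorem Polynomial.coeff_zero_one_add_X_pow_sub_one (n : ℕ) :
    ((1 + X) ^ n - 1 : R[X]).coeff 0 = 0 := by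
  simp [coeff_one_add_X_pow]

theorem Polynomial.coeff_one_add_X_pow_sub_one {n k : ℕ} (hk : 0 < k) :
    ((1 + X) ^ n - 1 : R[X]).coeff k = n.choose k := by
  simp [coeff_one_add_X_pow, coeff_one, hk.ne']

theorem Polynomial.coeff_prod_one_add_X_pow_sub_one {k : ℕ} (n : Fin k → ℕ) (r : ℕ) :
    (∏ i, ((1 + X) ^ n i - 1 : R[X])).coeff r =
      ∑ μ ∈ (antidiagonalTuple k r).filter (fun μ => ∀ i, 0 < μ i),
        ∏ i, ((n i).choose (μ i) : R) := by
  rw [coeff_prod_eq_sum_pos_antidiagonalTuple _ fun i => coeff_zero_one_add_X_pow_sub_one (n i)]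
  refine sum_congr rfl fun μ hμ => prod_congr rfl fun i _ => ?_
  exact coeff_one_add_X_pow_sub_one ((mem_filter.1 hμ).2 i)

theorem Polynomial.coeff_one_add_X_pow_sub_one_pow_mul (p d a r : ℕ) :
    (((1 + X) ^ p - 1) ^ d * (1 + X) ^ a : R[X]).coeff r =
      ∑ i ∈ range (d + 1), (-1) ^ i * (d.choose i : R) * (((d - i) * p + a).choose r : R) := by
  rw [sub_eq_neg_add, add_pow, sum_mul, finsetSum_coeff]
  refine sum_congr rfl fun i _ => ?_
  have : (-1 : R[X]) ^ i * ((1 + X) ^ p) ^ (d - i) * (d.choose i : R[X]) * (1 + X) ^ a =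
      C ((-1) ^ i * (d.choose i : R)) * (1 + X) ^ ((d - i) * p + a) := by
    simp only [map_mul, map_pow, map_neg, map_one, map_natCast]
    ring
  rw [this, coeff_C_mul, coeff_one_add_X_pow]

end

/-- Adding the two composition sums gives a single alternating sum. -/
theorem sum_pos_compositions_add (p a₀ r d : ℕ) :
    (∑ μ ∈ (Finset.Nat.antidiagonalTuple d r).filter (fun μ => ∀ i, 0 < μ i),
        ∏ i, (p.choose (μ i) : ℤ)) +
      ∑ μ ∈ (Finset.Nat.antidiagonalTuple (d + 1) r).filter (fun μ => ∀ i, 0 < μ i),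
        (∏ i : Fin d, (p.choose (μ i.castSucc) : ℤ)) * (a₀.choose (μ (Fin.last d)) : ℤ) =
      ∑ i ∈ Finset.range (d + 1),
        (-1 : ℤ) ^ i * (d.choose i : ℤ) * (((d - i) * p + a₀).choose r : ℤ) := by
  have h_first := coeff_prod_one_add_X_pow_sub_one (R := ℤ) (fun _ : Fin d => p) r
  have h_second := coeff_prod_one_add_X_pow_sub_one (R := ℤ) (Fin.snoc (fun _ : Fin d => p) a₀) r
  simp only [Fin.prod_const, Fin.prod_univ_castSucc, Fin.snoc_castSucc, Fin.snoc_last]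
    at h_first h_second
  rw [← h_first, ← h_second, ← coeff_add, ← coeff_one_add_X_pow_sub_one_pow_mul]
  congr 1
  ring
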